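/- arXiv:1604.01060 — 2 statements merged into one kernel-verified Lean document; each statement's English description precedes it below -/
import Mathlib

section
/- For an idempotent e = (e,e') of a Jordan pair with Peirce decomposition V = V_2 ⊕ V_1 ⊕ V_0, the map φ_e(x) = x + Q_{x_1} x_2^{-1}, defined on the open set N_e of elements x = x_2 + x_1 + x_0 with x_2 invertible in the Jordan algebra V_2⁺, is a diffeomorphism of N_e onto itself, with inverse x ↦ x − Q_{x_1} x_2^{-1}. -/
/-- A (linear) Jordan pair over `ℝ`: a pair of modules with trilinear products,
symmetric in the outer variables, satisfying the fundamental Jordan pair identity. -/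
structure JordanPair (Vp Vm : Type*) [AddCommGroup Vp] [Module ℝ Vp]
    [AddCommGroup Vm] [Module ℝ Vm] where
  tp : Vp →ₗ[ℝ] Vm →ₗ[ℝ] Vp →ₗ[ℝ] Vp
  tm : Vm →ₗ[ℝ] Vp →ₗ[ℝ] Vm →ₗ[ℝ] Vm
  symm_p : ∀ x y z, tp x y z = tp z y x
  symm_m : ∀ x y z, tm x y z = tm z y x
  jp_p : ∀ x y u v z,
    tp x y (tp u v z) - tp u v (tp x y z) = tp (tp x y u) v z - tp u (tm y x v) z
  jp_m : ∀ y x v u w,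
    tm y x (tm v u w) - tm v u (tm y x w) = tm (tm y x v) u w - tm v (tp x y u) w

open scoped Classical

variable {Vp Vm : Type*}
  [NormedAddCommGroup Vp] [NormedSpace ℝ Vp] [FiniteDimensional ℝ Vp]
  [NormedAddCommGroup Vm] [NormedSpace ℝ Vm] [FiniteDimensional ℝ Vm]

/-- Quadratic operator `Q_x y = ½{x,y,x}` on the `+` side. -/
noncomputable def JordanPair.Qp (J : JordanPair Vp Vm) (x : Vp) (y : Vm) : Vp :=
  (2⁻¹ : ℝ) • J.tp x y x

/-- Quadratic operator `Q_y x = ½{y,x,y}` on the `−` side. -/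
noncomputable def JordanPair.Qm (J : JordanPair Vp Vm) (y : Vm) (x : Vp) : Vm :=
  (2⁻¹ : ℝ) • J.tm y x y

/-- `D_{e,e'}` as an endomorphism of `V⁺`. -/
noncomputable def JordanPair.TT (J : JordanPair Vp Vm) (e : Vp) (e' : Vm) :
    Module.End ℝ Vp := J.tp e e'

/-- Projection onto the Peirce-2 space, as the polynomial `½T(T−1)` in `T = D_{e,e'}`. -/
noncomputable def JordanPair.pi2 (J : JordanPair Vp Vm) (e : Vp) (e' : Vm) :
    Module.End ℝ Vp := (2⁻¹ : ℝ) • (J.TT e e' * J.TT e e' - J.TT e e')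

/-- Projection onto the Peirce-1 space, as the polynomial `T(2−T)` in `T = D_{e,e'}`. -/
noncomputable def JordanPair.pi1 (J : JordanPair Vp Vm) (e : Vp) (e' : Vm) :
    Module.End ℝ Vp := (2 : ℝ) • J.TT e e' - J.TT e e' * J.TT e e'

/-- Projection onto the Peirce-0 space. -/
noncomputable def JordanPair.pi0 (J : JordanPair Vp Vm) (e : Vp) (e' : Vm) :
    Module.End ℝ Vp := 1 - J.pi2 e e' - J.pi1 e e'

/-- `y` is the inverse of `a` in the Peirce-2 Jordan algebra `V₂⁺ = [e]`:
`y ∈ V₂⁻`, `Q_a y = a`, `Q_y a = y`, and `Q_a Q_y = id` on `V₂⁺`, `Q_y Q_a = id`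
on `V₂⁻` (i.e. `Q_a : V₂⁻ → V₂⁺` is invertible with inverse `Q_y`). -/
def JordanPair.IsInvPair (J : JordanPair Vp Vm) (e : Vp) (e' : Vm)
    (a : Vp) (y : Vm) : Prop :=
  J.tm e' e y = (2 : ℝ) • y ∧ J.Qp a y = a ∧ J.Qm y a = y ∧
  (∀ z : Vp, J.tp e e' z = (2 : ℝ) • z → J.Qp a (J.Qm y z) = z) ∧
  (∀ w : Vm, J.tm e' e w = (2 : ℝ) • w → J.Qm y (J.Qp a w) = w)

/-- `N_e`: the set of `x = x₂ + x₁ + x₀` with `x₂` invertible in `V₂⁺`. -/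
def JordanPair.Ninv (J : JordanPair Vp Vm) (e : Vp) (e' : Vm) : Set Vp :=
  {x | ∃ y, J.IsInvPair e e' (J.pi2 e e' x) y}

/-- The inverse `x₂⁻¹ ∈ V₂⁻` of the Peirce-2 component of `x` (junk value `0` otherwise). -/
noncomputable def JordanPair.jinv (J : JordanPair Vp Vm) (e : Vp) (e' : Vm) (x : Vp) : Vm :=
  if h : ∃ y, J.IsInvPair e e' (J.pi2 e e' x) y then h.choose else 0

/-- `φ_e(x) = x + Q_{x₁} x₂⁻¹`. -/
noncomputable def JordanPair.phi (J : JordanPair Vp Vm) (e : Vp) (e' : Vm) (x : Vp) : Vp :=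
  x + J.Qp (J.pi1 e e' x) (J.jinv e e' x)

/-- `ψ_e(x) = x − Q_{x₁} x₂⁻¹`. -/
noncomputable def JordanPair.psi (J : JordanPair Vp Vm) (e : Vp) (e' : Vm) (x : Vp) : Vp :=
  x - J.Qp (J.pi1 e e' x) (J.jinv e e' x)

set_option linter.unusedSectionVars false

namespace JordanPair


/-- JP2 plus side -/
theorem jp2p (J : JordanPair Vp Vm) (x : Vp) (y : Vm) (z : Vp) :
    J.tp (J.tp x y x) y z = J.tp x (J.tm y x y) z := by
  have h := J.jp_p x y x y z
  linear_combination (norm := module) -h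

/-- JP2 minus side -/
theorem jp2m (J : JordanPair Vp Vm) (x : Vp) (y : Vm) (w : Vm) :
    J.tm (J.tm y x y) x w = J.tm y (J.tp x y x) w := by
  have h := J.jp_m y x y x w
  linear_combination (norm := module) -h

/-- JP7 : {x v {x y x}} = {x {y x v} x} -/
theorem jp7a (J : JordanPair Vp Vm) (x : Vp) (y v : Vm) :
    J.tp x v (J.tp x y x) = J.tp x (J.tm y x v) x := by
  have h1 := J.jp_p x y x v x
  have h2 := J.jp_p x v x y x
  rw [J.symm_p (J.tp x y x) v x] at h1
  rw [J.symm_p (J.tp x v x) y x, J.symm_m v x y] at h2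
  linear_combination (norm := module) (-2/3 : ℝ) • h1 + (-1/3 : ℝ) • h2

/-- JP7 other form : {x y {x v x}} = {x {y x v} x} -/
theorem jp7b (J : JordanPair Vp Vm) (x : Vp) (y v : Vm) :
    J.tp x y (J.tp x v x) = J.tp x (J.tm y x v) x := by
  have h1 := J.jp_p x y x v x
  have h2 := J.jp_p x v x y x
  rw [J.symm_p (J.tp x y x) v x] at h1
  rw [J.symm_p (J.tp x v x) y x, J.symm_m v x y] at h2
  linear_combination (norm := module) (-1/3 : ℝ) • h1 + (-2/3 : ℝ) • h2

/-- JP7 minus side -/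
theorem jp7am (J : JordanPair Vp Vm) (y : Vm) (x v : Vp) :
    J.tm y v (J.tm y x y) = J.tm y (J.tp x y v) y := by
  have h1 := J.jp_m y x y v y
  have h2 := J.jp_m y v y x y
  rw [J.symm_m (J.tm y x y) v y] at h1
  rw [J.symm_m (J.tm y v y) x y, J.symm_p v y x] at h2
  linear_combination (norm := module) (-2/3 : ℝ) • h1 + (-1/3 : ℝ) • h2

theorem jp7bm (J : JordanPair Vp Vm) (y : Vm) (x v : Vp) :
    J.tm y x (J.tm y v y) = J.tm y (J.tp x y v) y := by
  have h1 := J.jp_m y x y v y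
  have h2 := J.jp_m y v y x y
  rw [J.symm_m (J.tm y x y) v y] at h1
  rw [J.symm_m (J.tm y v y) x y, J.symm_p v y x] at h2
  linear_combination (norm := module) (-1/3 : ℝ) • h1 + (-2/3 : ℝ) • h2


/-- Linearized JP7 (plus side). -/
theorem ljp7 (J : JordanPair Vp Vm) (x z : Vp) (y v : Vm) :
    J.tp z v (J.tp x y x) + (2:ℝ) • J.tp x v (J.tp x y z)
      = (2:ℝ) • J.tp x (J.tm y x v) z + J.tp x (J.tm y z v) x := by
  have h1 := J.jp7a (x + z) y v
  have h2 := J.jp7a (x - z) y v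
  have h3 := J.jp7a z y v
  simp only [map_add, map_sub, LinearMap.add_apply, LinearMap.sub_apply] at h1 h2
  rw [J.symm_p z y x] at h1 h2
  rw [J.symm_p z (J.tm y x v) x] at h1 h2
  rw [J.symm_p z (J.tm y z v) x] at h1 h2
  linear_combination (norm := module) (2⁻¹:ℝ) • h1 - (2⁻¹:ℝ) • h2 - h3


/-- Linearized JP7 (minus side). -/
theorem ljp7m (J : JordanPair Vp Vm) (y w : Vm) (x v : Vp) :
    J.tm w v (J.tm y x y) + (2:ℝ) • J.tm y v (J.tm y x w)
      = (2:ℝ) • J.tm y (J.tp x y v) w + J.tm y (J.tp x w v) y := by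
  have h1 := J.jp7am (y + w) x v
  have h2 := J.jp7am (y - w) x v
  have h3 := J.jp7am w x v
  simp only [map_add, map_sub, LinearMap.add_apply, LinearMap.sub_apply] at h1 h2
  rw [J.symm_m w x y] at h1 h2
  rw [J.symm_m w (J.tp x y v) y] at h1 h2
  rw [J.symm_m w (J.tp x w v) y] at h1 h2
  linear_combination (norm := module) (2⁻¹:ℝ) • h1 - (2⁻¹:ℝ) • h2 - h3

/-- `D_{x,y}² z = D_{{x,y,x},y} z + {x,{y,z,y},x}` (doubled). -/
theorem l4p (J : JordanPair Vp Vm) (x z : Vp) (y : Vm) :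
    (2:ℝ) • J.tp x y (J.tp x y z)
      = J.tp (J.tp x y x) y z + J.tp x (J.tm y z y) x := by
  have hL := J.ljp7 x z y y
  have hs := J.symm_p z y (J.tp x y x)
  have h4 := J.jp2p x y z
  linear_combination (norm := module) hL - hs - (2:ℝ) • h4

theorem l4m (J : JordanPair Vp Vm) (y w : Vm) (x : Vp) :
    (2:ℝ) • J.tm y x (J.tm y x w)
      = J.tm (J.tm y x y) x w + J.tm y (J.tp x w x) y := by
  have hL := J.ljp7m y w x x
  have hs := J.symm_m w x (J.tm y x y)
  have h4 := J.jp2m x y w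
  linear_combination (norm := module) hL - hs - (2:ℝ) • h4

/-- Fundamental formula, raw trilinear form. -/
theorem ffp (J : JordanPair Vp Vm) (x : Vp) (y v : Vm) :
    J.tp (J.tp x y x) v (J.tp x y x)
      = J.tp x (J.tm y (J.tp x v x) y) x := by
  have h5 := J.ljp7 x (J.tp x y x) y v
  rw [J.jp7b x y y] at h5
  rw [J.jp7a x (J.tm y x y) v] at h5
  rw [J.jp2m x y v] at h5
  rw [J.jp7a x y (J.tm y x v)] at h5
  have h7 := J.l4m y v x
  rw [J.jp2m x y v] at h7
  have h8 : J.tp x ((2:ℝ) • J.tm y x (J.tm y x v)) x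
      = J.tp x (J.tm y (J.tp x y x) v + J.tm y (J.tp x v x) y) x := by rw [h7]
  simp only [map_add, map_smul, LinearMap.add_apply, LinearMap.smul_apply] at h8
  linear_combination (norm := module) h5 + h8


section Idem

variable (J : JordanPair Vp Vm) (e : Vp) (e' : Vm)

theorem tpe (he : J.Qp e e' = e) : J.tp e e' e = (2:ℝ) • e := by
  have h : (2⁻¹:ℝ) • J.tp e e' e = e := he
  linear_combination (norm := module) (2:ℝ) • h

theorem tme (he' : J.Qm e' e = e') : J.tm e' e e' = (2:ℝ) • e' := by
  have h : (2⁻¹:ℝ) • J.tm e' e e' = e' := he'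
  linear_combination (norm := module) (2:ℝ) • h

theorem T3p (hp : J.TT e e' * (J.TT e e' - 1) * (J.TT e e' - 2) = 0) (z : Vp) :
    J.tp e e' (J.tp e e' (J.tp e e' z))
      = (3:ℝ) • J.tp e e' (J.tp e e' z) - (2:ℝ) • J.tp e e' z := by
  have h := LinearMap.ext_iff.mp hp z
  simp only [JordanPair.TT, Module.End.mul_apply, LinearMap.sub_apply, Module.End.one_apply,
    Module.End.ofNat_apply, map_sub, map_smul, LinearMap.zero_apply] at h
  simp only [← Nat.cast_smul_eq_nsmul ℝ, Nat.cast_ofNat, map_smul] at h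
  linear_combination (norm := module) h

theorem T3m (hp' : ∀ w : Vm,
      J.tm e' e (J.tm e' e (J.tm e' e w - w) - (2:ℝ) • (J.tm e' e w - w)) = 0) (w : Vm) :
    J.tm e' e (J.tm e' e (J.tm e' e w))
      = (3:ℝ) • J.tm e' e (J.tm e' e w) - (2:ℝ) • J.tm e' e w := by
  have h := hp' w
  simp only [map_sub, map_smul] at h
  linear_combination (norm := module) h


theorem eig_zero {V : Type*} [AddCommGroup V] [Module ℝ V] (f : V →ₗ[ℝ] V) (z : V) (c : ℝ)
    (hf : f (f (f z)) = (3:ℝ) • f (f z) - (2:ℝ) • f z) (h : f z = c • z)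
    (hc : c^3 - 3*c^2 + 2*c ≠ 0) : z = 0 := by
  have t1 : f (f z) = (c*c) • z := by rw [h, map_smul, h, smul_smul]
  have t2 : f (f (f z)) = (c*(c*c)) • z := by rw [h, map_smul, map_smul, t1, smul_smul]
  rw [t2, t1, h] at hf
  have h6 : (c^3 - 3*c^2 + 2*c) • z = 0 := by
    simp only [smul_smul] at hf
    linear_combination (norm := module) hf
  rcases smul_eq_zero.mp h6 with hh | hh
  · exact absurd hh hc
  · exact hh

theorem eig3p (hp : J.TT e e' * (J.TT e e' - 1) * (J.TT e e' - 2) = 0) {z : Vp}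
    (h : J.tp e e' z = (3:ℝ) • z) : z = 0 :=
  eig_zero (J.tp e e') z 3 (J.T3p e e' hp z) h (by norm_num)

theorem eig4p (hp : J.TT e e' * (J.TT e e' - 1) * (J.TT e e' - 2) = 0) {z : Vp}
    (h : J.tp e e' z = (4:ℝ) • z) : z = 0 :=
  eig_zero (J.tp e e') z 4 (J.T3p e e' hp z) h (by norm_num)

theorem eig3m (hp' : ∀ w : Vm,
      J.tm e' e (J.tm e' e (J.tm e' e w - w) - (2:ℝ) • (J.tm e' e w - w)) = 0) {w : Vm}
    (h : J.tm e' e w = (3:ℝ) • w) : w = 0 :=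
  eig_zero (J.tm e' e) w 3 (J.T3m e e' hp' w) h (by norm_num)

theorem eig4m (hp' : ∀ w : Vm,
      J.tm e' e (J.tm e' e (J.tm e' e w - w) - (2:ℝ) • (J.tm e' e w - w)) = 0) {w : Vm}
    (h : J.tm e' e w = (4:ℝ) • w) : w = 0 :=
  eig_zero (J.tm e' e) w 4 (J.T3m e e' hp' w) h (by norm_num)

theorem pi2_apply (z : Vp) :
    J.pi2 e e' z = (2⁻¹:ℝ) • (J.tp e e' (J.tp e e' z) - J.tp e e' z) := by
  simp [JordanPair.pi2, JordanPair.TT, LinearMap.smul_apply, LinearMap.sub_apply,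
    Module.End.mul_apply]

theorem pi1_apply (z : Vp) :
    J.pi1 e e' z = (2:ℝ) • J.tp e e' z - J.tp e e' (J.tp e e' z) := by
  simp [JordanPair.pi1, JordanPair.TT, LinearMap.smul_apply, LinearMap.sub_apply,
    Module.End.mul_apply]

theorem Tpi2 (hp : J.TT e e' * (J.TT e e' - 1) * (J.TT e e' - 2) = 0) (z : Vp) :
    J.tp e e' (J.pi2 e e' z) = (2:ℝ) • J.pi2 e e' z := by
  rw [pi2_apply]
  have h := J.T3p e e' hp z
  simp only [map_smul, map_sub]
  linear_combination (norm := module) (2⁻¹:ℝ) • h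

theorem Tpi1 (hp : J.TT e e' * (J.TT e e' - 1) * (J.TT e e' - 2) = 0) (z : Vp) :
    J.tp e e' (J.pi1 e e' z) = J.pi1 e e' z := by
  rw [pi1_apply]
  have h := J.T3p e e' hp z
  simp only [map_smul, map_sub]
  linear_combination (norm := module) -h

theorem Tpi0 (hp : J.TT e e' * (J.TT e e' - 1) * (J.TT e e' - 2) = 0) (z : Vp) :
    J.tp e e' (z - J.pi2 e e' z - J.pi1 e e' z) = 0 := by
  rw [pi2_apply, pi1_apply]
  have h := J.T3p e e' hp z
  simp only [map_smul, map_sub]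
  linear_combination (norm := module) (2⁻¹:ℝ) • h

theorem pi2_eigen2 {z : Vp} (h : J.tp e e' z = (2:ℝ) • z) : J.pi2 e e' z = z := by
  rw [pi2_apply, h, map_smul, h]
  module

theorem pi2_ker {z : Vp} (h : J.tp e e' z = 0) : J.pi2 e e' z = 0 := by
  rw [pi2_apply, h, map_zero]
  module

theorem pi1_ker {z : Vp} (h : J.tp e e' z = 0) : J.pi1 e e' z = 0 := by
  rw [pi1_apply, h, map_zero]
  module

theorem derp (u : Vp) (v : Vm) (w : Vp) :
    J.tp e e' (J.tp u v w)
      = J.tp (J.tp e e' u) v w + J.tp u v (J.tp e e' w) - J.tp u (J.tm e' e v) w := by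
  have h := J.jp_p e e' u v w
  linear_combination (norm := module) h

theorem derm (v : Vm) (u : Vp) (w : Vm) :
    J.tm e' e (J.tm v u w)
      = J.tm (J.tm e' e v) u w + J.tm v u (J.tm e' e w) - J.tm v (J.tp e e' u) w := by
  have h := J.jp_m e' e v u w
  linear_combination (norm := module) h

/-- `Q_e Q_{e'} = π₂` (doubled raw form). -/
theorem QeQem (he : J.Qp e e' = e) (z : Vp) :
    J.tp e (J.tm e' z e') e
      = (2:ℝ) • J.tp e e' (J.tp e e' z) - (2:ℝ) • J.tp e e' z := by
  have h := J.jp_p z e' e e' e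
  rw [J.tpe e e' he] at h
  simp only [map_smul] at h
  rw [J.symm_p z e' e] at h
  rw [J.symm_p (J.tp e e' z) e' e] at h
  linear_combination (norm := module) h

/-- `Q_{e'} Q_e = π₂⁻` (doubled raw form). -/
theorem QmQem (he' : J.Qm e' e = e') (w : Vm) :
    J.tm e' (J.tp e w e) e'
      = (2:ℝ) • J.tm e' e (J.tm e' e w) - (2:ℝ) • J.tm e' e w := by
  have h := J.jp_m w e e' e e'
  rw [J.tme e e' he'] at h
  simp only [map_smul] at h
  rw [J.symm_m w e e'] at h
  rw [J.symm_m (J.tm e' e w) e e'] at h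
  linear_combination (norm := module) h

theorem TQa {a : Vp} (ha : J.tp e e' a = (2:ℝ) • a) (w : Vm) :
    J.tp e e' (J.tp a w a) = (4:ℝ) • J.tp a w a - J.tp a (J.tm e' e w) a := by
  have h := J.derp e e' a w a
  rw [ha] at h
  simp only [map_smul, LinearMap.smul_apply] at h
  linear_combination (norm := module) h

theorem TQy {y : Vm} (hy : J.tm e' e y = (2:ℝ) • y) (z : Vp) :
    J.tm e' e (J.tm y z y) = (4:ℝ) • J.tm y z y - J.tm y (J.tp e e' z) y := by
  have h := J.derm e e' y z y
  rw [hy] at h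
  simp only [map_smul, LinearMap.smul_apply] at h
  linear_combination (norm := module) h

theorem Qa_kill1 (hp : J.TT e e' * (J.TT e e' - 1) * (J.TT e e' - 2) = 0)
    {a : Vp} (ha : J.tp e e' a = (2:ℝ) • a) {w : Vm} (hw : J.tm e' e w = w) :
    J.tp a w a = 0 := by
  refine J.eig3p e e' hp ?_
  rw [J.TQa e e' ha w, hw]
  module

theorem Qa_kill0 (hp : J.TT e e' * (J.TT e e' - 1) * (J.TT e e' - 2) = 0)
    {a : Vp} (ha : J.tp e e' a = (2:ℝ) • a) {w : Vm} (hw : J.tm e' e w = 0) :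
    J.tp a w a = 0 := by
  refine J.eig4p e e' hp ?_
  rw [J.TQa e e' ha w, hw]
  simp only [map_zero, LinearMap.zero_apply]
  module

theorem Qa_eig2 {a : Vp} (ha : J.tp e e' a = (2:ℝ) • a) {w : Vm}
    (hw : J.tm e' e w = (2:ℝ) • w) :
    J.tp e e' (J.tp a w a) = (2:ℝ) • J.tp a w a := by
  rw [J.TQa e e' ha w, hw]
  simp only [map_smul, LinearMap.smul_apply]
  module

theorem Qy_kill1 (hp' : ∀ w : Vm,
      J.tm e' e (J.tm e' e (J.tm e' e w - w) - (2:ℝ) • (J.tm e' e w - w)) = 0)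
    {y : Vm} (hy : J.tm e' e y = (2:ℝ) • y) {z : Vp} (hz : J.tp e e' z = z) :
    J.tm y z y = 0 := by
  refine J.eig3m e e' hp' ?_
  rw [J.TQy e e' hy z, hz]
  module

theorem Qy_kill0 (hp' : ∀ w : Vm,
      J.tm e' e (J.tm e' e (J.tm e' e w - w) - (2:ℝ) • (J.tm e' e w - w)) = 0)
    {y : Vm} (hy : J.tm e' e y = (2:ℝ) • y) {z : Vp} (hz : J.tp e e' z = 0) :
    J.tm y z y = 0 := by
  refine J.eig4m e e' hp' ?_
  rw [J.TQy e e' hy z, hz]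
  simp only [map_zero, LinearMap.zero_apply]
  module

theorem Qy_eig2 {y : Vm} (hy : J.tm e' e y = (2:ℝ) • y) {z : Vp}
    (hz : J.tp e e' z = (2:ℝ) • z) :
    J.tm e' e (J.tm y z y) = (2:ℝ) • J.tm y z y := by
  rw [J.TQy e e' hy z, hz]
  simp only [map_smul, LinearMap.smul_apply]
  module

theorem Q11 {u : Vp} (hu : J.tp e e' u = u) {y : Vm} (hy : J.tm e' e y = (2:ℝ) • y) :
    J.tp e e' (J.tp u y u) = 0 := by
  have h := J.derp e e' u y u
  rw [hu, hy] at h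
  simp only [map_smul, LinearMap.smul_apply] at h
  linear_combination (norm := module) h

end Idem

/-- Peirce-2 projection on the minus side. -/
noncomputable def pim2 (J : JordanPair Vp Vm) (e : Vp) (e' : Vm) : Module.End ℝ Vm :=
  (2⁻¹ : ℝ) • (J.tm e' e ∘ₗ J.tm e' e - J.tm e' e)

section Idem2

variable (J : JordanPair Vp Vm) (e : Vp) (e' : Vm)

theorem pim2_apply (w : Vm) :
    J.pim2 e e' w = (2⁻¹:ℝ) • (J.tm e' e (J.tm e' e w) - J.tm e' e w) := by
  simp [pim2, LinearMap.smul_apply, LinearMap.sub_apply, LinearMap.comp_apply]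

theorem Tpim2 (hp' : ∀ w : Vm,
      J.tm e' e (J.tm e' e (J.tm e' e w - w) - (2:ℝ) • (J.tm e' e w - w)) = 0) (w : Vm) :
    J.tm e' e (J.pim2 e e' w) = (2:ℝ) • J.pim2 e e' w := by
  rw [pim2_apply]
  have h := J.T3m e e' hp' w
  simp only [map_smul, map_sub]
  linear_combination (norm := module) (2⁻¹:ℝ) • h

theorem pim2_eigen2 {w : Vm} (h : J.tm e' e w = (2:ℝ) • w) : J.pim2 e e' w = w := by
  rw [pim2_apply, h, map_smul, h]
  module

theorem pim2_idem (hp' : ∀ w : Vm,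
      J.tm e' e (J.tm e' e (J.tm e' e w - w) - (2:ℝ) • (J.tm e' e w - w)) = 0) (w : Vm) :
    J.pim2 e e' (J.pim2 e e' w) = J.pim2 e e' w :=
  J.pim2_eigen2 e e' (J.Tpim2 e e' hp' w)

/-- `Q_p` of a Peirce-2 pair lands in Peirce 2. -/
theorem TQp2 {a : Vp} (ha : J.tp e e' a = (2:ℝ) • a) {w : Vm}
    (hw : J.tm e' e w = (2:ℝ) • w) :
    J.tp e e' (J.Qp a w) = (2:ℝ) • J.Qp a w := by
  simp only [JordanPair.Qp, map_smul]
  rw [J.Qa_eig2 e e' ha hw]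
  module

theorem TQm2 {y : Vm} (hy : J.tm e' e y = (2:ℝ) • y) {z : Vp}
    (hz : J.tp e e' z = (2:ℝ) • z) :
    J.tm e' e (J.Qm y z) = (2:ℝ) • J.Qm y z := by
  simp only [JordanPair.Qm, map_smul]
  rw [J.Qy_eig2 e e' hy hz]
  module

theorem TQ11 {u : Vp} (hu : J.tp e e' u = u) {y : Vm} (hy : J.tm e' e y = (2:ℝ) • y) :
    J.tp e e' (J.Qp u y) = 0 := by
  simp only [JordanPair.Qp, map_smul]
  rw [J.Q11 e e' hu hy]
  module

/-- `Q_e Q_{e'} = π₂`. -/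
theorem QpQm_e (he : J.Qp e e' = e) (z : Vp) :
    J.Qp e (J.Qm e' z) = J.pi2 e e' z := by
  simp only [JordanPair.Qp, JordanPair.Qm, map_smul, LinearMap.smul_apply]
  rw [J.QeQem e e' he z, pi2_apply]
  module

/-- `Q_{e'} Q_e = π₂⁻`. -/
theorem QmQp_e (he' : J.Qm e' e = e') (w : Vm) :
    J.Qm e' (J.Qp e w) = J.pim2 e e' w := by
  simp only [JordanPair.Qp, JordanPair.Qm, map_smul, LinearMap.smul_apply]
  rw [J.QmQem e e' he' w, pim2_apply]
  module

/-- Fundamental formula in `Q` form. -/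
theorem ffq (x : Vp) (y v : Vm) :
    J.Qp (J.Qp x y) v = J.Qp x (J.Qm y (J.Qp x v)) := by
  have h := J.ffp x y v
  simp only [JordanPair.Qp, JordanPair.Qm, map_smul, LinearMap.smul_apply]
  linear_combination (norm := module) (8⁻¹:ℝ) • h

theorem Qp_sub (a : Vp) (u v : Vm) : J.Qp a (u - v) = J.Qp a u - J.Qp a v := by
  simp [JordanPair.Qp, map_sub, smul_sub]

end Idem2

/-- `Q_a` as a linear map. -/
noncomputable def QpL (J : JordanPair Vp Vm) (a : Vp) : Vm →ₗ[ℝ] Vp :=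
  (2⁻¹:ℝ) • ((J.tp a).flip a)

noncomputable def QmL (J : JordanPair Vp Vm) (y : Vm) : Vp →ₗ[ℝ] Vm :=
  (2⁻¹:ℝ) • ((J.tm y).flip y)

theorem QpL_apply (J : JordanPair Vp Vm) (a : Vp) (w : Vm) : J.QpL a w = J.Qp a w := by
  simp [QpL, JordanPair.Qp, LinearMap.flip_apply]

theorem QmL_apply (J : JordanPair Vp Vm) (y : Vm) (z : Vp) : J.QmL y z = J.Qm y z := by
  simp [QmL, JordanPair.Qm, LinearMap.flip_apply]

/-- The auxiliary operator `w ↦ Q_y Q_b π₂⁻ w + (1-π₂⁻) w`. -/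
noncomputable def hop (J : JordanPair Vp Vm) (e : Vp) (e' : Vm) (b : Vp) (y : Vm) :
    Module.End ℝ Vm :=
  (J.QmL y) ∘ₗ (J.QpL b) ∘ₗ (J.pim2 e e') + (1 - J.pim2 e e')

/-- The operator whose invertibility characterises `N_e`. -/
noncomputable def gEnd (J : JordanPair Vp Vm) (e : Vp) (e' : Vm) (x : Vp) :
    Module.End ℝ Vm :=
  J.hop e e' (J.pi2 e e' x) e'

theorem hop_apply (J : JordanPair Vp Vm) (e : Vp) (e' : Vm) (b : Vp) (y : Vm) (w : Vm) :
    J.hop e e' b y w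
      = J.Qm y (J.Qp b (J.pim2 e e' w)) + (w - J.pim2 e e' w) := by
  simp [hop, QpL_apply, QmL_apply, LinearMap.add_apply, LinearMap.sub_apply,
    Module.End.one_apply, LinearMap.comp_apply]

theorem gEnd_apply (J : JordanPair Vp Vm) (e : Vp) (e' : Vm) (x : Vp) (w : Vm) :
    J.gEnd e e' x w
      = J.Qm e' (J.Qp (J.pi2 e e' x) (J.pim2 e e' w)) + (w - J.pim2 e e' w) :=
  J.hop_apply e e' _ e' w

section Key

variable (J : JordanPair Vp Vm) (e : Vp) (e' : Vm)
variable (he : J.Qp e e' = e) (he' : J.Qm e' e = e')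
variable (hp : J.TT e e' * (J.TT e e' - 1) * (J.TT e e' - 2) = 0)
variable (hp' : ∀ w : Vm,
      J.tm e' e (J.tm e' e (J.tm e' e w - w) - (2:ℝ) • (J.tm e' e w - w)) = 0)

include he he' hp hp'

theorem isUnit_gEnd_of {x : Vp} {y : Vm} (hinv : J.IsInvPair e e' (J.pi2 e e' x) y) :
    IsUnit (J.gEnd e e' x) := by
  obtain ⟨hy2, hQa, hQy, h4, h5⟩ := hinv
  have hTe : J.tp e e' e = (2:ℝ) • e := J.tpe e e' he
  have hTe' : J.tm e' e e' = (2:ℝ) • e' := J.tme e e' he'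
  have hTa : J.tp e e' (J.pi2 e e' x) = (2:ℝ) • (J.pi2 e e' x) := J.Tpi2 e e' hp x
  refine ⟨⟨J.gEnd e e' x, J.hop e e' e y, ?_, ?_⟩, rfl⟩
  · -- gEnd x * hop e y = 1
    refine LinearMap.ext fun w => ?_
    have hTpw := J.Tpim2 e e' hp' w
    have hz : J.tp e e' (J.Qp e (J.pim2 e e' w)) = (2:ℝ) • J.Qp e (J.pim2 e e' w) :=
      J.TQp2 e e' hTe hTpw
    have hX : J.tm e' e (J.Qm y (J.Qp e (J.pim2 e e' w)))
        = (2:ℝ) • J.Qm y (J.Qp e (J.pim2 e e' w)) := J.TQm2 e e' hy2 hz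
    have h1 : J.pim2 e e' (J.hop e e' e y w) = J.Qm y (J.Qp e (J.pim2 e e' w)) := by
      rw [J.hop_apply, map_add, map_sub, J.pim2_idem e e' hp',
        J.pim2_eigen2 e e' hX]
      abel
    rw [Module.End.mul_apply, Module.End.one_apply, J.gEnd_apply, h1, J.hop_apply,
      h4 _ hz, J.QmQp_e e e' he', J.pim2_idem e e' hp']
    abel
  · -- hop e y * gEnd x = 1
    refine LinearMap.ext fun w => ?_
    have hTpw := J.Tpim2 e e' hp' w
    have hQapw : J.tp e e' (J.Qp (J.pi2 e e' x) (J.pim2 e e' w))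
        = (2:ℝ) • J.Qp (J.pi2 e e' x) (J.pim2 e e' w) := J.TQp2 e e' hTa hTpw
    have hXm : J.tm e' e (J.Qm e' (J.Qp (J.pi2 e e' x) (J.pim2 e e' w)))
        = (2:ℝ) • J.Qm e' (J.Qp (J.pi2 e e' x) (J.pim2 e e' w)) :=
      J.TQm2 e e' hTe' hQapw
    have h1 : J.pim2 e e' (J.gEnd e e' x w)
        = J.Qm e' (J.Qp (J.pi2 e e' x) (J.pim2 e e' w)) := by
      rw [J.gEnd_apply, map_add, map_sub, J.pim2_idem e e' hp',
        J.pim2_eigen2 e e' hXm]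
      abel
    rw [Module.End.mul_apply, Module.End.one_apply, J.hop_apply, h1, J.gEnd_apply,
      J.QpQm_e e e' he, J.pi2_eigen2 e e' hQapw, h5 _ hTpw]
    abel

omit he hp in
theorem gEnd_apply_invpair {x : Vp} {y : Vm} (hinv : J.IsInvPair e e' (J.pi2 e e' x) y) :
    J.gEnd e e' x y = J.Qm e' (J.pi2 e e' x) := by
  obtain ⟨hy2, hQa, -, -, -⟩ := hinv
  rw [J.gEnd_apply, J.pim2_eigen2 e e' hy2, hQa]
  abel

theorem isInvPair_of_isUnit {x : Vp} (huu : IsUnit (J.gEnd e e' x)) :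
    ∃ y : Vm, J.IsInvPair e e' (J.pi2 e e' x) y := by
  obtain ⟨u, huspec⟩ := huu
  have hTe : J.tp e e' e = (2:ℝ) • e := J.tpe e e' he
  have hTe' : J.tm e' e e' = (2:ℝ) • e' := J.tme e e' he'
  set a := J.pi2 e e' x with ha_def
  have hTa : J.tp e e' a = (2:ℝ) • a := J.Tpi2 e e' hp x
  have hpi2a : J.pi2 e e' a = a := J.pi2_eigen2 e e' hTa
  set H := (↑u⁻¹ : Module.End ℝ Vm) with hH
  have hHG : ∀ v, H (J.gEnd e e' x v) = v := by
    intro v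
    rw [hH, ← huspec, ← Module.End.mul_apply, u.inv_mul, Module.End.one_apply]
  have hGH : ∀ v, J.gEnd e e' x (H v) = v := by
    intro v
    conv_lhs => rw [← huspec]
    rw [hH, ← Module.End.mul_apply, u.mul_inv, Module.End.one_apply]
  have hcomm : ∀ w, J.pim2 e e' (J.gEnd e e' x w) = J.gEnd e e' x (J.pim2 e e' w) := by
    intro w
    have hX : J.tm e' e (J.Qm e' (J.Qp a (J.pim2 e e' w)))
        = (2:ℝ) • J.Qm e' (J.Qp a (J.pim2 e e' w)) :=
      J.TQm2 e e' hTe' (J.TQp2 e e' hTa (J.Tpim2 e e' hp' w))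
    rw [J.gEnd_apply, J.gEnd_apply, ← ha_def, map_add, map_sub,
      J.pim2_idem e e' hp' w, J.pim2_eigen2 e e' hX]
  have hHpi : ∀ w, J.pim2 e e' (H w) = H (J.pim2 e e' w) := by
    intro w
    have h1 : J.gEnd e e' x (J.pim2 e e' (H w)) = J.pim2 e e' w := by
      rw [← hcomm, hGH]
    have h2 := congrArg H h1
    rwa [hHG] at h2
  set y := H (J.Qm e' a) with hy_def
  have hπνa : J.pim2 e e' (J.Qm e' a) = J.Qm e' a :=
    J.pim2_eigen2 e e' (J.TQm2 e e' hTe' hTa)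
  have hπy : J.pim2 e e' y = y := by rw [hy_def, hHpi, hπνa]
  have hy2 : J.tm e' e y = (2:ℝ) • y := by
    conv_lhs => rw [← hπy]
    rw [J.Tpim2 e e' hp', hπy]
  have hGy : J.gEnd e e' x y = J.Qm e' a := hGH _
  have hνQ : J.Qm e' (J.Qp a y) = J.Qm e' a := by
    rw [J.gEnd_apply, ← ha_def, hπy] at hGy
    simpa using hGy
  have hQay : J.Qp a y = a := by
    have h3 : J.Qp e (J.Qm e' (J.Qp a y)) = J.Qp e (J.Qm e' a) := by rw [hνQ]
    rw [J.QpQm_e e e' he, J.QpQm_e e e' he] at h3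
    rwa [J.pi2_eigen2 e e' (J.TQp2 e e' hTa hy2), hpi2a] at h3
  have hff : ∀ w, J.Qp a (J.Qm y (J.Qp a w)) = J.Qp a w := by
    intro w; rw [← J.ffq a y w, hQay]
  have cond5 : ∀ w, J.tm e' e w = (2:ℝ) • w → J.Qm y (J.Qp a w) = w := by
    intro w hw
    have hπd : J.pim2 e e' (J.Qm y (J.Qp a w) - w) = J.Qm y (J.Qp a w) - w := by
      rw [map_sub, J.pim2_eigen2 e e' (J.TQm2 e e' hy2 (J.TQp2 e e' hTa hw)),
        J.pim2_eigen2 e e' hw]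
    have hQad : J.Qp a (J.Qm y (J.Qp a w) - w) = 0 := by
      rw [J.Qp_sub, hff, sub_self]
    have hGd : J.gEnd e e' x (J.Qm y (J.Qp a w) - w) = 0 := by
      rw [J.gEnd_apply, ← ha_def, hπd, hQad]
      simp [JordanPair.Qm]
    have h0 := hHG (J.Qm y (J.Qp a w) - w)
    rw [hGd, map_zero] at h0
    exact sub_eq_zero.mp h0.symm
  have cond3 : J.Qm y a = y := by
    have h5 := cond5 y hy2
    rwa [hQay] at h5
  have cond4 : ∀ z, J.tp e e' z = (2:ℝ) • z → J.Qp a (J.Qm y z) = z := by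
    intro z hz
    have hπνz : J.pim2 e e' (J.Qm e' z) = J.Qm e' z :=
      J.pim2_eigen2 e e' (J.TQm2 e e' hTe' hz)
    have hπw : J.pim2 e e' (H (J.Qm e' z)) = H (J.Qm e' z) := by rw [hHpi, hπνz]
    have hw2 : J.tm e' e (H (J.Qm e' z)) = (2:ℝ) • H (J.Qm e' z) := by
      conv_lhs => rw [← hπw]
      rw [J.Tpim2 e e' hp', hπw]
    have hGw : J.gEnd e e' x (H (J.Qm e' z)) = J.Qm e' z := hGH _
    rw [J.gEnd_apply, ← ha_def, hπw] at hGw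
    have hνQw : J.Qm e' (J.Qp a (H (J.Qm e' z))) = J.Qm e' z := by simpa using hGw
    have hQaw : J.Qp a (H (J.Qm e' z)) = z := by
      have h3 : J.Qp e (J.Qm e' (J.Qp a (H (J.Qm e' z)))) = J.Qp e (J.Qm e' z) := by
        rw [hνQw]
      rw [J.QpQm_e e e' he, J.QpQm_e e e' he] at h3
      rwa [J.pi2_eigen2 e e' (J.TQp2 e e' hTa hw2), J.pi2_eigen2 e e' hz] at h3
    rw [← hQaw, hff]
  exact ⟨y, hy2, hQay, cond3, cond4, cond5⟩

omit he hp in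
/-- Any inverse pair witness is given by the inverse operator. -/
theorem invpair_eq_of_isUnit {x : Vp} (hu : IsUnit (J.gEnd e e' x)) {y : Vm}
    (hinv : J.IsInvPair e e' (J.pi2 e e' x) y) :
    y = (↑hu.unit⁻¹ : Module.End ℝ Vm) (J.Qm e' (J.pi2 e e' x)) := by
  have h1 := J.gEnd_apply_invpair e e' he' hp' hinv
  have h2 : (↑hu.unit⁻¹ : Module.End ℝ Vm) ((↑hu.unit : Module.End ℝ Vm) y) = y := by
    rw [← Module.End.mul_apply, hu.unit.inv_mul, Module.End.one_apply]
  rw [hu.unit_spec, h1] at h2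
  exact h2.symm

end Key

section Chart

variable (J : JordanPair Vp Vm) (e : Vp) (e' : Vm)

theorem jinv_spec {x : Vp} (hx : x ∈ J.Ninv e e') :
    J.IsInvPair e e' (J.pi2 e e' x) (J.jinv e e' x) := by
  have hx' : ∃ y, J.IsInvPair e e' (J.pi2 e e' x) y := hx
  rw [JordanPair.jinv, dif_pos hx']
  exact hx'.choose_spec

theorem jinv_congr {x₁ x₂ : Vp} (h : J.pi2 e e' x₁ = J.pi2 e e' x₂) :
    J.jinv e e' x₁ = J.jinv e e' x₂ := by
  simp only [JordanPair.jinv, h]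

theorem Tq_zero (hp : J.TT e e' * (J.TT e e' - 1) * (J.TT e e' - 2) = 0)
    {x : Vp} (hx : x ∈ J.Ninv e e') :
    J.tp e e' (J.Qp (J.pi1 e e' x) (J.jinv e e' x)) = 0 :=
  J.TQ11 e e' (J.Tpi1 e e' hp x) (J.jinv_spec e e' hx).1

theorem pi2_phi (hp : J.TT e e' * (J.TT e e' - 1) * (J.TT e e' - 2) = 0)
    {x : Vp} (hx : x ∈ J.Ninv e e') :
    J.pi2 e e' (J.phi e e' x) = J.pi2 e e' x := by
  rw [JordanPair.phi, map_add, J.pi2_ker e e' (J.Tq_zero e e' hp hx), add_zero]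

theorem pi1_phi (hp : J.TT e e' * (J.TT e e' - 1) * (J.TT e e' - 2) = 0)
    {x : Vp} (hx : x ∈ J.Ninv e e') :
    J.pi1 e e' (J.phi e e' x) = J.pi1 e e' x := by
  rw [JordanPair.phi, map_add, J.pi1_ker e e' (J.Tq_zero e e' hp hx), add_zero]

theorem pi2_psi (hp : J.TT e e' * (J.TT e e' - 1) * (J.TT e e' - 2) = 0)
    {x : Vp} (hx : x ∈ J.Ninv e e') :
    J.pi2 e e' (J.psi e e' x) = J.pi2 e e' x := by
  rw [JordanPair.psi, map_sub, J.pi2_ker e e' (J.Tq_zero e e' hp hx), sub_zero]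

theorem pi1_psi (hp : J.TT e e' * (J.TT e e' - 1) * (J.TT e e' - 2) = 0)
    {x : Vp} (hx : x ∈ J.Ninv e e') :
    J.pi1 e e' (J.psi e e' x) = J.pi1 e e' x := by
  rw [JordanPair.psi, map_sub, J.pi1_ker e e' (J.Tq_zero e e' hp hx), sub_zero]

theorem phi_mem (hp : J.TT e e' * (J.TT e e' - 1) * (J.TT e e' - 2) = 0)
    {x : Vp} (hx : x ∈ J.Ninv e e') : J.phi e e' x ∈ J.Ninv e e' := by
  refine ⟨J.jinv e e' x, ?_⟩
  rw [J.pi2_phi e e' hp hx]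
  exact J.jinv_spec e e' hx

theorem psi_mem (hp : J.TT e e' * (J.TT e e' - 1) * (J.TT e e' - 2) = 0)
    {x : Vp} (hx : x ∈ J.Ninv e e') : J.psi e e' x ∈ J.Ninv e e' := by
  refine ⟨J.jinv e e' x, ?_⟩
  rw [J.pi2_psi e e' hp hx]
  exact J.jinv_spec e e' hx

theorem psi_phi (hp : J.TT e e' * (J.TT e e' - 1) * (J.TT e e' - 2) = 0)
    {x : Vp} (hx : x ∈ J.Ninv e e') : J.psi e e' (J.phi e e' x) = x := by
  rw [JordanPair.psi, J.pi1_phi e e' hp hx,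
    J.jinv_congr e e' (J.pi2_phi e e' hp hx), JordanPair.phi]
  abel

theorem phi_psi (hp : J.TT e e' * (J.TT e e' - 1) * (J.TT e e' - 2) = 0)
    {x : Vp} (hx : x ∈ J.Ninv e e') : J.phi e e' (J.psi e e' x) = x := by
  rw [JordanPair.phi, J.pi1_psi e e' hp hx,
    J.jinv_congr e e' (J.pi2_psi e e' hp hx), JordanPair.psi]
  abel

end Chart

section Smooth

theorem isUnit_toCLM_iff (f : Module.End ℝ Vm) :
    IsUnit (LinearMap.toContinuousLinearMap f) ↔ IsUnit f := by
  constructor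
  · rintro ⟨v, hv⟩
    refine ⟨⟨f, ((↑(v⁻¹) : Vm →L[ℝ] Vm) : Vm →ₗ[ℝ] Vm), ?_, ?_⟩, rfl⟩
    · refine LinearMap.ext fun w => ?_
      have h1 : (↑v : Vm →L[ℝ] Vm) ((↑(v⁻¹) : Vm →L[ℝ] Vm) w) = w := by
        rw [← ContinuousLinearMap.mul_apply, v.mul_inv, ContinuousLinearMap.one_apply]
      rw [hv] at h1
      simp only [Module.End.mul_apply, Module.End.one_apply, ContinuousLinearMap.coe_coe,
        LinearMap.coe_toContinuousLinearMap'] at h1 ⊢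
      exact h1
    · refine LinearMap.ext fun w => ?_
      have h1 : (↑(v⁻¹) : Vm →L[ℝ] Vm) ((↑v : Vm →L[ℝ] Vm) w) = w := by
        rw [← ContinuousLinearMap.mul_apply, v.inv_mul, ContinuousLinearMap.one_apply]
      rw [hv] at h1
      simp only [Module.End.mul_apply, Module.End.one_apply, ContinuousLinearMap.coe_coe,
        LinearMap.coe_toContinuousLinearMap'] at h1 ⊢
      exact h1
  · rintro ⟨v, hv⟩
    refine ⟨⟨LinearMap.toContinuousLinearMap f,
      LinearMap.toContinuousLinearMap (↑(v⁻¹) : Module.End ℝ Vm), ?_, ?_⟩, rfl⟩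
    · refine ContinuousLinearMap.ext fun w => ?_
      simp only [ContinuousLinearMap.mul_apply, ContinuousLinearMap.one_apply,
        LinearMap.coe_toContinuousLinearMap']
      rw [← hv, ← Module.End.mul_apply, v.mul_inv, Module.End.one_apply]
    · refine ContinuousLinearMap.ext fun w => ?_
      simp only [ContinuousLinearMap.mul_apply, ContinuousLinearMap.one_apply,
        LinearMap.coe_toContinuousLinearMap']
      rw [← hv, ← Module.End.mul_apply, v.inv_mul, Module.End.one_apply]

variable (J : JordanPair Vp Vm) (e : Vp) (e' : Vm)

noncomputable def endm (u v : Vp) : Vm →ₗ[ℝ] Vm :=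
  (J.QmL e') ∘ₗ ((2⁻¹:ℝ) • ((J.tp (J.pi2 e e' u)).flip (J.pi2 e e' v))) ∘ₗ (J.pim2 e e')

theorem endm_diag (x : Vp) :
    J.endm e e' x x = (J.QmL e') ∘ₗ (J.QpL (J.pi2 e e' x)) ∘ₗ (J.pim2 e e') := rfl

noncomputable def lin2 : Vp →ₗ[ℝ] Vp →ₗ[ℝ] (Vm →L[ℝ] Vm) :=
  LinearMap.mk₂ ℝ (fun u v => LinearMap.toContinuousLinearMap (J.endm e e' u v))
    (fun u₁ u₂ v => by
      refine ContinuousLinearMap.ext fun w => ?_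
      simp only [LinearMap.coe_toContinuousLinearMap', ContinuousLinearMap.add_apply,
        ContinuousLinearMap.coe_smul', Pi.smul_apply, endm, QmL, LinearMap.comp_apply,
        LinearMap.smul_apply, LinearMap.add_apply, LinearMap.flip_apply, map_add, map_smul]
      module)
    (fun c u v => by
      refine ContinuousLinearMap.ext fun w => ?_
      simp only [LinearMap.coe_toContinuousLinearMap', ContinuousLinearMap.add_apply,
        ContinuousLinearMap.coe_smul', Pi.smul_apply, endm, QmL, LinearMap.comp_apply,
        LinearMap.smul_apply, LinearMap.add_apply, LinearMap.flip_apply, map_add, map_smul]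
      module)
    (fun u v₁ v₂ => by
      refine ContinuousLinearMap.ext fun w => ?_
      simp only [LinearMap.coe_toContinuousLinearMap', ContinuousLinearMap.add_apply,
        ContinuousLinearMap.coe_smul', Pi.smul_apply, endm, QmL, LinearMap.comp_apply,
        LinearMap.smul_apply, LinearMap.add_apply, LinearMap.flip_apply, map_add, map_smul]
      module)
    (fun c u v => by
      refine ContinuousLinearMap.ext fun w => ?_
      simp only [LinearMap.coe_toContinuousLinearMap', ContinuousLinearMap.add_apply,
        ContinuousLinearMap.coe_smul', Pi.smul_apply, endm, QmL, LinearMap.comp_apply,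
        LinearMap.smul_apply, LinearMap.add_apply, LinearMap.flip_apply, map_add, map_smul]
      module)

noncomputable def c2 : Vp →L[ℝ] (Vp →L[ℝ] (Vm →L[ℝ] Vm)) :=
  LinearMap.toContinuousLinearMap
    ((LinearMap.toContinuousLinearMap :
        (Vp →ₗ[ℝ] (Vm →L[ℝ] Vm)) ≃ₗ[ℝ] (Vp →L[ℝ] (Vm →L[ℝ] Vm))).toLinearMap
      ∘ₗ (J.lin2 e e'))

theorem c2_apply (u v : Vp) :
    J.c2 e e' u v = LinearMap.toContinuousLinearMap (J.endm e e' u v) := by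
  simp only [c2, lin2, LinearMap.coe_toContinuousLinearMap', LinearMap.comp_apply,
    LinearEquiv.coe_coe, LinearMap.mk₂_apply]

noncomputable def gc (x : Vp) : Vm →L[ℝ] Vm :=
  J.c2 e e' x x + LinearMap.toContinuousLinearMap (1 - J.pim2 e e')

set_option maxHeartbeats 1000000 in
theorem hgc (x : Vp) :
    J.gc e e' x = LinearMap.toContinuousLinearMap (J.gEnd e e' x) := by
  refine ContinuousLinearMap.ext fun w => ?_
  rw [gc, ContinuousLinearMap.add_apply, c2_apply]
  simp only [LinearMap.coe_toContinuousLinearMap', endm_diag, gEnd, hop,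
    LinearMap.add_apply]

set_option maxHeartbeats 1000000 in
theorem gc_contDiff : ContDiff ℝ (⊤ : ℕ∞) (J.gc e e') := by
  have h1 : ContDiff ℝ (⊤ : ℕ∞) (fun x : Vp => J.c2 e e' x x) :=
    (J.c2 e e').contDiff.clm_apply contDiff_id
  exact h1.add contDiff_const

noncomputable def qm1 (u v : Vp) : Vm →ₗ[ℝ] Vp :=
  (2⁻¹:ℝ) • ((J.tp (J.pi1 e e' u)).flip (J.pi1 e e' v))

theorem qm1_diag (x : Vp) (y : Vm) : J.qm1 e e' x x y = J.Qp (J.pi1 e e' x) y := by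
  simp [qm1, JordanPair.Qp, LinearMap.flip_apply]

noncomputable def lin3 : Vp →ₗ[ℝ] Vp →ₗ[ℝ] (Vm →L[ℝ] Vp) :=
  LinearMap.mk₂ ℝ (fun u v => LinearMap.toContinuousLinearMap (J.qm1 e e' u v))
    (fun u₁ u₂ v => by
      refine ContinuousLinearMap.ext fun w => ?_
      simp only [LinearMap.coe_toContinuousLinearMap', ContinuousLinearMap.add_apply,
        ContinuousLinearMap.coe_smul', Pi.smul_apply, qm1, LinearMap.comp_apply,
        LinearMap.smul_apply, LinearMap.add_apply, LinearMap.flip_apply, map_add, map_smul]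
      module)
    (fun c u v => by
      refine ContinuousLinearMap.ext fun w => ?_
      simp only [LinearMap.coe_toContinuousLinearMap', ContinuousLinearMap.add_apply,
        ContinuousLinearMap.coe_smul', Pi.smul_apply, qm1, LinearMap.comp_apply,
        LinearMap.smul_apply, LinearMap.add_apply, LinearMap.flip_apply, map_add, map_smul]
      module)
    (fun u v₁ v₂ => by
      refine ContinuousLinearMap.ext fun w => ?_
      simp only [LinearMap.coe_toContinuousLinearMap', ContinuousLinearMap.add_apply,
        ContinuousLinearMap.coe_smul', Pi.smul_apply, qm1, LinearMap.comp_apply,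
        LinearMap.smul_apply, LinearMap.add_apply, LinearMap.flip_apply, map_add, map_smul]
      module)
    (fun c u v => by
      refine ContinuousLinearMap.ext fun w => ?_
      simp only [LinearMap.coe_toContinuousLinearMap', ContinuousLinearMap.add_apply,
        ContinuousLinearMap.coe_smul', Pi.smul_apply, qm1, LinearMap.comp_apply,
        LinearMap.smul_apply, LinearMap.add_apply, LinearMap.flip_apply, map_add, map_smul]
      module)

noncomputable def c3 : Vp →L[ℝ] (Vp →L[ℝ] (Vm →L[ℝ] Vp)) :=
  LinearMap.toContinuousLinearMap
    ((LinearMap.toContinuousLinearMap :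
        (Vp →ₗ[ℝ] (Vm →L[ℝ] Vp)) ≃ₗ[ℝ] (Vp →L[ℝ] (Vm →L[ℝ] Vp))).toLinearMap
      ∘ₗ (J.lin3 e e'))

theorem c3_apply (u v : Vp) (y : Vm) : J.c3 e e' u v y = J.qm1 e e' u v y := by
  simp only [c3, lin3, LinearMap.coe_toContinuousLinearMap', LinearMap.comp_apply,
    LinearEquiv.coe_coe, LinearMap.mk₂_apply]

noncomputable def nuC : Vp →L[ℝ] Vm :=
  LinearMap.toContinuousLinearMap ((J.QmL e') ∘ₗ (J.pi2 e e' : Vp →ₗ[ℝ] Vp))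

theorem nuC_apply (z : Vp) : J.nuC e e' z = J.Qm e' (J.pi2 e e' z) := by
  simp [nuC, LinearMap.coe_toContinuousLinearMap', LinearMap.comp_apply, QmL_apply]

noncomputable def jinvF (x : Vp) : Vm :=
  Ring.inverse (J.gc e e' x) (J.nuC e e' x)

end Smooth

section Final

variable (J : JordanPair Vp Vm) (e : Vp) (e' : Vm)
variable (he : J.Qp e e' = e) (he' : J.Qm e' e = e')
variable (hp : J.TT e e' * (J.TT e e' - 1) * (J.TT e e' - 2) = 0)
variable (hp' : ∀ w : Vm,
      J.tm e' e (J.tm e' e (J.tm e' e w - w) - (2:ℝ) • (J.tm e' e w - w)) = 0)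

include he he' hp hp'

theorem isUnit_gc {x : Vp} (hx : x ∈ J.Ninv e e') : IsUnit (J.gc e e' x) := by
  rw [J.hgc]
  exact (isUnit_toCLM_iff _).mpr
    (J.isUnit_gEnd_of e e' he he' hp hp' (J.jinv_spec e e' hx))

theorem ninv_eq_preimage :
    J.Ninv e e' = (J.gc e e') ⁻¹' {g : Vm →L[ℝ] Vm | IsUnit g} := by
  ext x
  constructor
  · intro hx
    exact J.isUnit_gc e e' he he' hp hp' hx
  · intro hx
    have hx' : IsUnit (J.gEnd e e' x) := by
      refine (isUnit_toCLM_iff _).mp ?_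
      rw [← J.hgc]
      exact hx
    exact J.isInvPair_of_isUnit e e' he he' hp hp' hx'

theorem jinv_eq_jinvF {x : Vp} (hx : x ∈ J.Ninv e e') :
    J.jinv e e' x = J.jinvF e e' x := by
  have hC := J.isUnit_gc e e' he he' hp hp' hx
  have hgy : J.gc e e' x (J.jinv e e' x) = J.nuC e e' x := by
    rw [J.hgc, J.nuC_apply]
    simp only [LinearMap.coe_toContinuousLinearMap']
    exact J.gEnd_apply_invpair e e' he' hp' (J.jinv_spec e e' hx)
  symm
  calc J.jinvF e e' x
      = Ring.inverse (J.gc e e' x) (J.gc e e' x (J.jinv e e' x)) := by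
        rw [jinvF, hgy]
    _ = (Ring.inverse (J.gc e e' x) * J.gc e e' x) (J.jinv e e' x) := by
        rw [ContinuousLinearMap.mul_apply]
    _ = J.jinv e e' x := by
        rw [Ring.inverse_mul_cancel _ hC, ContinuousLinearMap.one_apply]

theorem jinvF_contDiffOn : ContDiffOn ℝ (⊤ : ℕ∞) (J.jinvF e e') (J.Ninv e e') := by
  intro x hx
  have hC := J.isUnit_gc e e' he he' hp hp' hx
  have h1 : ContDiffAt ℝ (⊤ : ℕ∞) (fun z => Ring.inverse (J.gc e e' z)) x := by
    have h2 := contDiffAt_ringInverse ℝ (n := (⊤ : ℕ∞)) hC.unit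
    rw [hC.unit_spec] at h2
    exact h2.comp x (J.gc_contDiff e e').contDiffAt
  have h3 : ContDiffAt ℝ (⊤ : ℕ∞) (fun z => J.nuC e e' z) x := (J.nuC e e').contDiff.contDiffAt
  exact (h1.clm_apply h3).contDiffWithinAt

theorem phi_contDiffOn : ContDiffOn ℝ (⊤ : ℕ∞) (J.phi e e') (J.Ninv e e') := by
  have hc3 : ContDiffOn ℝ (⊤ : ℕ∞) (fun x : Vp => J.c3 e e' x x) (J.Ninv e e') :=
    ((J.c3 e e').contDiff.clm_apply contDiff_id).contDiffOn
  have hsm : ContDiffOn ℝ (⊤ : ℕ∞)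
      (fun x => x + (J.c3 e e' x x) (J.jinvF e e' x)) (J.Ninv e e') :=
    ContDiffOn.add contDiffOn_id
      (ContDiffOn.clm_apply hc3 (J.jinvF_contDiffOn e e' he he' hp hp'))
  refine hsm.congr ?_
  intro x hx
  rw [JordanPair.phi, J.c3_apply, J.qm1_diag,
    J.jinv_eq_jinvF e e' he he' hp hp' hx]

theorem psi_contDiffOn : ContDiffOn ℝ (⊤ : ℕ∞) (J.psi e e') (J.Ninv e e') := by
  have hc3 : ContDiffOn ℝ (⊤ : ℕ∞) (fun x : Vp => J.c3 e e' x x) (J.Ninv e e') :=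
    ((J.c3 e e').contDiff.clm_apply contDiff_id).contDiffOn
  have hsm : ContDiffOn ℝ (⊤ : ℕ∞)
      (fun x => x - (J.c3 e e' x x) (J.jinvF e e' x)) (J.Ninv e e') :=
    ContDiffOn.sub contDiffOn_id
      (ContDiffOn.clm_apply hc3 (J.jinvF_contDiffOn e e' he he' hp hp'))
  refine hsm.congr ?_
  intro x hx
  rw [JordanPair.psi, J.c3_apply, J.qm1_diag,
    J.jinv_eq_jinvF e e' he he' hp hp' hx]

end Final

end JordanPair

/-- **The chart `φ_e`.** For an idempotent `(e,e')` of a finite-dimensional real Jordan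
pair with its Peirce decomposition, the map `φ_e(x) = x + Q_{x₁} x₂⁻¹`, defined on the
open set `N_e` of elements whose Peirce-2 component is invertible in the Jordan algebra
`V₂⁺ = [e]`, is a diffeomorphism of `N_e` onto itself, with inverse `x ↦ x − Q_{x₁} x₂⁻¹`. -/
theorem jordanPair_phi_diffeomorphism (J : JordanPair Vp Vm) (e : Vp) (e' : Vm)
    (he : J.Qp e e' = e) (he' : J.Qm e' e = e')
    (hpeirce : J.TT e e' * (J.TT e e' - 1) * (J.TT e e' - 2) = 0)
    (hpeirce' : ∀ w : Vm,
      J.tm e' e (J.tm e' e (J.tm e' e w - w) - (2:ℝ) • (J.tm e' e w - w)) = 0) :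
    IsOpen (J.Ninv e e') ∧
    Set.BijOn (J.phi e e') (J.Ninv e e') (J.Ninv e e') ∧
    ContDiffOn ℝ (⊤ : ℕ∞) (J.phi e e') (J.Ninv e e') ∧
    ContDiffOn ℝ (⊤ : ℕ∞) (J.psi e e') (J.Ninv e e') ∧
    (∀ x ∈ J.Ninv e e', J.psi e e' (J.phi e e' x) = x ∧ J.phi e e' (J.psi e e' x) = x) := by
  refine ⟨?_, ⟨?_, ?_, ?_⟩, ?_, ?_, ?_⟩
  · rw [J.ninv_eq_preimage e e' he he' hpeirce hpeirce']
    exact Units.isOpen.preimage (J.gc_contDiff e e').continuous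
  · intro x hx
    exact J.phi_mem e e' hpeirce hx
  · intro x hx y hy h
    rw [← J.psi_phi e e' hpeirce hx, h, J.psi_phi e e' hpeirce hy]
  · intro x hx
    exact ⟨J.psi e e' x, J.psi_mem e e' hpeirce hx, J.phi_psi e e' hpeirce hx⟩
  · exact J.phi_contDiffOn e e' he he' hpeirce hpeirce'
  · exact J.psi_contDiffOn e e' he he' hpeirce hpeirce'
  · intro x hx
    exact ⟨J.psi_phi e e' hpeirce hx, J.phi_psi e e' hpeirce hx⟩
end

section
/- Let e be an idempotent of a finite-dimensional Jordan pair with dual bases {c_α}, {ĉ_α} compatible with the Peirce decomposition (index sets I_2, I_1, I_0). Then ∑_{α∈I_2} D_{c_α, ĉ_α} = p_2 · D_{e,e'}, where p_2 is the structure constant of the simple subpair (V_2⁺, V_2⁻) (i.e. Tr_{V_2⁺} D_{u,v} = 2p_2 τ(u,v) for u ∈ V_2⁺, v ∈ V_2⁻). -/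
/-!
Let `D = D(e,e')` and `Q = ½ (D² - D)`, the projection onto `V₂⁺`. Pairing the dual-basis sum
with `w` gives `τ(∑_{α ∈ I₂} D(c_α, ĉ_α) x, w) = Tr(Q D(x,w))`, so it suffices to show
`Tr(Q D(x,y)) = p₂ τ(D x, y)`. For both sides `D` and `D(e',e)` are adjoint (on the left because
`Q` commutes with `D`), so both vanish off the diagonal Peirce blocks. On a diagonal block
`{y x e'} ∈ V₂⁻`; the identity `{e' {x y z} e'} = 2 {{y x e'} z e'} - {y x {e' z e'}}`, together
with `{e {e' z e'} e} = 4 Q z` and the fact that `τ`-adjoint operators have equal traces, gives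
`2 Tr(Q D(x,y)) = Tr(Q D(e, {y x e'}))`, which by definition of `p₂` is
`2 p₂ τ(e, {y x e'}) = 2 p₂ τ(D x, y)`.
-/

open Module

section Pairing

variable {K V W ι : Type*} [Field K] [AddCommGroup V] [Module K V] [AddCommGroup W] [Module K W]
  [DecidableEq ι] (B : V →ₗ[K] W →ₗ[K] K) (b : Basis ι K V)

lemma Module.Basis.repr_eq_of_pairing {c : ι → W}
    (hbc : ∀ i j, B (b i) (c j) = if i = j then 1 else 0) (x : V) (i : ι) :
    b.repr x i = B x (c i) := by
  have : b.coord i = B.flip (c i) := b.ext fun j ↦ by simp [hbc, Finsupp.single_apply]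
  exact congr($this x)

lemma LinearMap.trace_eq_sum_pairing [Fintype ι] {c : ι → W}
    (hbc : ∀ i j, B (b i) (c j) = if i = j then 1 else 0) (f : Module.End K V) :
    LinearMap.trace K V f = ∑ i, B (f (b i)) (c i) := by
  simp [LinearMap.trace_eq_matrix_trace K b, Matrix.trace, LinearMap.toMatrix_apply,
    b.repr_eq_of_pairing B hbc]

lemma LinearMap.trace_comp_eq_sum_pairing [Fintype ι] [FiniteDimensional K V] {c : ι → W}
    (hbc : ∀ i j, B (b i) (c j) = if i = j then 1 else 0) {s : Finset ι} {q : Module.End K V}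
    (hq : ∀ i, q (b i) = if i ∈ s then b i else 0) (f : Module.End K V) :
    LinearMap.trace K V (q ∘ₗ f) = ∑ i ∈ s, B (f (b i)) (c i) := by
  rw [LinearMap.trace_comp_comm', LinearMap.trace_eq_sum_pairing B b hbc,
    ← Fintype.sum_ite_mem s]
  refine Finset.sum_congr rfl fun i _ ↦ ?_
  rw [LinearMap.comp_apply, hq]
  split_ifs <;> simp

lemma linearIndependent_of_pairing [Fintype ι] {c : ι → W}
    (hbc : ∀ i j, B (b i) (c j) = if i = j then 1 else 0) : LinearIndependent K c := by
  rw [Fintype.linearIndependent_iff]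
  intro a ha j
  simpa [hbc] using congr(B (b j) $ha)

lemma finrank_le_of_pairing [FiniteDimensional K V] (hB : ∀ y, (∀ x, B x y = 0) → y = 0) :
    finrank K W ≤ finrank K V := by
  have hinj : Function.Injective B.flip := by
    rw [← LinearMap.ker_eq_bot, LinearMap.ker_eq_bot']
    exact fun y hy ↦ hB y fun x ↦ congr($hy x)
  simpa [Subspace.dual_finrank_eq] using LinearMap.finrank_le_finrank_of_injective hinj

noncomputable def Module.Basis.ofPairing [Fintype ι] [FiniteDimensional K V]
    [FiniteDimensional K W] {c : ι → W} (hbc : ∀ i j, B (b i) (c j) = if i = j then 1 else 0)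
    (hB : ∀ y, (∀ x, B x y = 0) → y = 0) : Basis ι K W :=
  basisOfLinearIndependentOfCardEqFinrank' c (linearIndependent_of_pairing B b hbc)
    ((linearIndependent_of_pairing B b hbc).fintype_card_le_finrank.antisymm
      ((finrank_le_of_pairing B hB).trans (finrank_eq_card_basis b).le))

@[simp]
lemma Module.Basis.coe_ofPairing [Fintype ι] [FiniteDimensional K V] [FiniteDimensional K W]
    {c : ι → W} (hbc : ∀ i j, B (b i) (c j) = if i = j then 1 else 0)
    (hB : ∀ y, (∀ x, B x y = 0) → y = 0) : ⇑(b.ofPairing B hbc hB) = c := by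
  simp [Module.Basis.ofPairing]

lemma LinearMap.trace_eq_of_adjoint [Fintype ι] (c : Basis ι K W)
    (hbc : ∀ i j, B (b i) (c j) = if i = j then 1 else 0) {f : Module.End K V}
    {g : Module.End K W} (hfg : ∀ x y, B (f x) y = B x (g y)) :
    LinearMap.trace K V f = LinearMap.trace K W g := by
  have hcb : ∀ i j, B.flip (c i) (b j) = if i = j then 1 else 0 := fun i j ↦ by
    simp [hbc, eq_comm]
  simp [LinearMap.trace_eq_sum_pairing B b hbc, LinearMap.trace_eq_sum_pairing B.flip c hcb, hfg]

end Pairing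

lemma LinearMap.trace_comp_eq_trace_restrict {K V : Type*} [Field K] [AddCommGroup V]
    [Module K V] [FiniteDimensional K V] {P : Submodule K V} {q f : Module.End K V}
    (hq : ∀ x, q x ∈ P) (hqP : ∀ x ∈ P, q x = x) (hf : ∀ x ∈ P, f x ∈ P) :
    LinearMap.trace K V (q ∘ₗ f) = LinearMap.trace K P (f.restrict hf) := by
  have hq' : q = P.subtype ∘ₗ q.codRestrict P hq := rfl
  rw [hq', LinearMap.comp_assoc, LinearMap.trace_comp_comm']
  congr 1
  ext z
  simp [hqP _ (hf z z.2)]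

section PeirceSpectrum

variable {K V W : Type*} [Field K] [AddCommGroup V] [Module K V] [AddCommGroup W] [Module K W]

/-- `f (f - 1) (f - 2) = 0`, i.e. `f` is diagonalisable with eigenvalues in `{0, 1, 2}`. -/
def HasPeirceSpectrum (f : Module.End K V) : Prop :=
  ∀ x, f (f (f x)) = (3 : K) • f (f x) - (2 : K) • f x

/-- Under `HasPeirceSpectrum f`, the projection onto the `2`-eigenspace of `f`. -/
def peirceProj2 (f : Module.End K V) : Module.End K V := (2⁻¹ : K) • (f * f - f)

lemma peirceProj2_apply (f : Module.End K V) (x : V) :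
    peirceProj2 f x = (2⁻¹ : K) • (f (f x) - f x) := rfl

lemma commute_peirceProj2 (f : Module.End K V) : Commute f (peirceProj2 f) :=
  (((Commute.refl f).mul_right (Commute.refl f)).sub_right (Commute.refl f)).smul_right _

lemma peirceProj2_apply_of_apply_eq [CharZero K] {f : Module.End K V} {x : V}
    (hx : f x = (2 : K) • x) : peirceProj2 f x = x := by
  rw [peirceProj2_apply, hx, map_smul, hx]
  module

namespace HasPeirceSpectrum

variable {f : Module.End K V}

lemma of_basis {ι : Type*} (b : Basis ι K V)
    (hb : ∀ i, f (b i) = 0 ∨ f (b i) = b i ∨ f (b i) = (2 : K) • b i) :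
    HasPeirceSpectrum f := by
  suffices f ∘ₗ f ∘ₗ f = (3 : K) • (f ∘ₗ f) - (2 : K) • f from fun x ↦ congr($this x)
  refine b.ext fun i ↦ ?_
  simp only [LinearMap.comp_apply, LinearMap.sub_apply, LinearMap.smul_apply]
  rcases hb i with h | h | h <;> simp only [h, map_smul, map_zero] <;> module

lemma of_adjoint (hf : HasPeirceSpectrum f) {g : Module.End K W} (B : V →ₗ[K] W →ₗ[K] K)
    (hB : ∀ y, (∀ x, B x y = 0) → y = 0) (hfg : ∀ x y, B (f x) y = B x (g y)) :
    HasPeirceSpectrum g := by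
  intro y
  rw [← sub_eq_zero]
  refine hB _ fun x ↦ ?_
  simp only [map_sub, map_smul, LinearMap.sub_apply, LinearMap.smul_apply, smul_eq_mul, ← hfg,
    hf x]
  ring

lemma apply_peirceProj2 (hf : HasPeirceSpectrum f) (x : V) :
    f (peirceProj2 f x) = (2 : K) • peirceProj2 f x := by
  simp only [peirceProj2_apply, map_smul, map_sub, hf x]
  module

lemma exists_decomp [CharZero K] (hf : HasPeirceSpectrum f) (x : V) :
    ∃ x₀ x₁ x₂ : V, x = x₀ + x₁ + x₂ ∧
      f x₀ = (0 : K) • x₀ ∧ f x₁ = (1 : K) • x₁ ∧ f x₂ = (2 : K) • x₂ := by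
  refine ⟨x - ((2 : K) • f x - f (f x)) - (2⁻¹ : K) • (f (f x) - f x),
    (2 : K) • f x - f (f x), (2⁻¹ : K) • (f (f x) - f x), by module, ?_, ?_, ?_⟩ <;>
  · simp only [map_sub, map_smul, hf x]
    module

lemma pairing_eq_zero [CharZero K] (hf : HasPeirceSpectrum f) {g : Module.End K W}
    (hg : HasPeirceSpectrum g) (F : V →ₗ[K] W →ₗ[K] K) (hfg : ∀ x y, F (f x) y = F x (g y))
    (hdiag : ∀ (i : K) x y, f x = i • x → g y = i • y → F x y = 0) : F = 0 := by
  have block : ∀ (i j : K) x y, f x = i • x → g y = j • y → F x y = 0 := by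
    intro i j x y hx hy
    by_cases hij : i = j
    · exact hdiag i x y hx (hij ▸ hy)
    have : (i - j) * F x y = 0 := by
      have := hfg x y
      rw [hx, hy, map_smul, LinearMap.smul_apply, map_smul, smul_eq_mul, smul_eq_mul] at this
      linear_combination this
    exact (mul_eq_zero.mp this).resolve_left (sub_ne_zero.mpr hij)
  ext x y
  obtain ⟨x₀, x₁, x₂, rfl, hx₀, hx₁, hx₂⟩ := hf.exists_decomp x
  obtain ⟨y₀, y₁, y₂, rfl, hy₀, hy₁, hy₂⟩ := hg.exists_decomp y
  simp only [map_add, LinearMap.add_apply, LinearMap.zero_apply,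
    block _ _ _ _ hx₀ hy₀, block _ _ _ _ hx₀ hy₁, block _ _ _ _ hx₀ hy₂,
    block _ _ _ _ hx₁ hy₀, block _ _ _ _ hx₁ hy₁, block _ _ _ _ hx₁ hy₂,
    block _ _ _ _ hx₂ hy₀, block _ _ _ _ hx₂ hy₁, block _ _ _ _ hx₂ hy₂, add_zero]

lemma trace_peirceProj2_comp [CharZero K] [FiniteDimensional K V] (hf : HasPeirceSpectrum f)
    {P : Submodule K V} (hP : ∀ z, z ∈ P ↔ f z = (2 : K) • z) {g : Module.End K V}
    (hg : ∀ z ∈ P, g z ∈ P) :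
    LinearMap.trace K V (peirceProj2 f ∘ₗ g) = LinearMap.trace K P (g.restrict hg) :=
  LinearMap.trace_comp_eq_trace_restrict (fun x ↦ (hP _).2 (hf.apply_peirceProj2 x))
    (fun x hx ↦ peirceProj2_apply_of_apply_eq ((hP x).1 hx)) hg

end HasPeirceSpectrum

end PeirceSpectrum

namespace JordanPair

variable {Vp Vm : Type*} [AddCommGroup Vp] [Module ℝ Vp] [AddCommGroup Vm] [Module ℝ Vm]
  (J : JordanPair Vp Vm)

lemma lie_tp_tp (x : Vp) (y : Vm) (u : Vp) (v : Vm) :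
    ⁅J.tp x y, J.tp u v⁆ = J.tp (J.tp x y u) v - J.tp u (J.tm y x v) := by
  ext z
  simpa [Ring.lie_def] using J.jp_p x y u v z

lemma tp_tp_eq_smul {x u w : Vp} {y v : Vm} {i j k : ℝ} (hu : J.tp x y u = i • u)
    (hv : J.tm y x v = j • v) (hw : J.tp x y w = k • w) :
    J.tp x y (J.tp u v w) = (i - j + k) • J.tp u v w := by
  have h := J.jp_p x y u v w
  simp only [hu, hv, hw, map_smul, LinearMap.smul_apply] at h
  linear_combination (norm := module) h

lemma tm_tm_eq_smul {y v w : Vm} {x u : Vp} {i j k : ℝ} (hv : J.tm y x v = i • v)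
    (hu : J.tp x y u = j • u) (hw : J.tm y x w = k • w) :
    J.tm y x (J.tm v u w) = (i - j + k) • J.tm v u w := by
  have h := J.jp_m y x v u w
  simp only [hu, hv, hw, map_smul, LinearMap.smul_apply] at h
  linear_combination (norm := module) h

lemma tm_tp_self (a : Vm) (x : Vp) (y : Vm) (z : Vp) :
    J.tm a (J.tp x y z) a = (2 : ℝ) • J.tm (J.tm y x a) z a - J.tm y x (J.tm a z a) := by
  have h := J.jp_m y x a z a
  rw [J.symm_m a z (J.tm y x a)] at h
  linear_combination (norm := module) h

lemma tp_tm_self_self {e : Vp} {e' : Vm} (he : J.tp e e' e = (2 : ℝ) • e) (z : Vp) :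
    J.tp e (J.tm e' z e') e = (2 : ℝ) • (J.tp e e' (J.tp e e' z) - J.tp e e' z) := by
  have h := J.jp_p z e' e e' e
  rw [he, map_smul, J.symm_p z e' e, J.symm_p (J.tp e e' z) e' e] at h
  linear_combination (norm := module) h

lemma tp_flip_comp_tm_flip {e : Vp} {e' : Vm} (he : J.tp e e' e = (2 : ℝ) • e) :
    (J.tp e).flip e ∘ₗ (J.tm e').flip e' = (4 : ℝ) • peirceProj2 (J.tp e e') := by
  ext z
  simp only [LinearMap.comp_apply, LinearMap.flip_apply, J.tp_tm_self_self he,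
    LinearMap.smul_apply, peirceProj2_apply, smul_smul]
  norm_num

noncomputable def traceForm : Vp →ₗ[ℝ] Vm →ₗ[ℝ] ℝ := J.tp.compr₂ (LinearMap.trace ℝ Vp)

def IsAssociative (B : Vp →ₗ[ℝ] Vm →ₗ[ℝ] ℝ) : Prop :=
  ∀ x y u v, B (J.tp x y u) v = B u (J.tm y x v)

lemma isAssociative_traceForm : J.IsAssociative J.traceForm := by
  intro x y u v
  rw [traceForm, LinearMap.compr₂_apply, LinearMap.compr₂_apply, ← sub_eq_zero, ← map_sub,
    ← lie_tp_tp, LinearMap.trace_lie]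

namespace IsAssociative

variable {J} {B : Vp →ₗ[ℝ] Vm →ₗ[ℝ] ℝ}

lemma tp_self_left (hB : J.IsAssociative B) (e : Vp) (a w : Vm) :
    B (J.tp e a e) w = B (J.tp e w e) a := by
  rw [hB, J.symm_m a e w, ← hB]

lemma tm_self_right (hB : J.IsAssociative B) (e' : Vm) (u z : Vp) :
    B u (J.tm e' z e') = B z (J.tm e' u e') := by
  rw [← hB, J.symm_p z e' u, hB]

lemma tp_comm (hB : J.IsAssociative B) (u x : Vp) (v w : Vm) :
    B (J.tp u v x) w = B (J.tp x w u) v := by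
  rw [J.symm_p u v x, hB, J.symm_m v x w, ← hB]

lemma pairing_sum_tp_apply [FiniteDimensional ℝ Vp] (hB : J.IsAssociative B) {ι : Type*}
    [Fintype ι] [DecidableEq ι] (b : Basis ι ℝ Vp) {c : ι → Vm}
    (hbc : ∀ i j, B (b i) (c j) = if i = j then 1 else 0) {s : Finset ι} {q : Module.End ℝ Vp}
    (hq : ∀ i, q (b i) = if i ∈ s then b i else 0) (x : Vp) (w : Vm) :
    B ((∑ i ∈ s, J.tp (b i) (c i)) x) w = LinearMap.trace ℝ Vp (q ∘ₗ J.tp x w) := by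
  rw [LinearMap.trace_comp_eq_sum_pairing B b hbc hq, LinearMap.sum_apply, map_sum,
    LinearMap.sum_apply]
  exact Finset.sum_congr rfl fun i _ ↦ hB.tp_comm _ _ _ _

end IsAssociative

section Trace

variable [FiniteDimensional ℝ Vp] [FiniteDimensional ℝ Vm] {B : Vp →ₗ[ℝ] Vm →ₗ[ℝ] ℝ}
  {ι : Type*} [Fintype ι] [DecidableEq ι]

/- With `U = {e · e}`, `U' = {e' · e'}` and `R = {{y x e'} · e'}` one has
`U' D(x,y) = 2 R - D(y,x) U'`, and `U D(y,x) U'` has the same trace as `U U' D(x,y)` because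
`U U'` and `U' U` are adjoint for `B`. -/
lemma trace_tp_flip_comp_tm_flip_comp_tp (hB : J.IsAssociative B) (b : Basis ι ℝ Vp)
    (c : Basis ι ℝ Vm) (hbc : ∀ i j, B (b i) (c j) = if i = j then 1 else 0) (e : Vp) (e' : Vm)
    (x : Vp) (y : Vm) :
    LinearMap.trace ℝ Vp ((J.tp e).flip e ∘ₗ (J.tm e').flip e' ∘ₗ J.tp x y) =
      LinearMap.trace ℝ Vp ((J.tp e).flip e ∘ₗ (J.tm (J.tm y x e')).flip e') := by
  set U := (J.tp e).flip e
  set U' := (J.tm e').flip e'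
  set R := (J.tm (J.tm y x e')).flip e'
  have hU'D : U' ∘ₗ J.tp x y = (2 : ℝ) • R - J.tm y x ∘ₗ U' := by
    ext z
    simp [U', R, J.tm_tp_self]
  have hmirror : LinearMap.trace ℝ Vp (U ∘ₗ J.tm y x ∘ₗ U') =
      LinearMap.trace ℝ Vp (U ∘ₗ U' ∘ₗ J.tp x y) := by
    rw [LinearMap.trace_comp_comm' (J.tm y x ∘ₗ U') U]
    refine (LinearMap.trace_eq_of_adjoint B b c hbc fun u w ↦ ?_).symm
    simp only [LinearMap.comp_apply, U, U', LinearMap.flip_apply]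
    rw [hB.tp_self_left, hB.tm_self_right, hB]
  have h : LinearMap.trace ℝ Vp (U ∘ₗ U' ∘ₗ J.tp x y) =
      2 * LinearMap.trace ℝ Vp (U ∘ₗ R) - LinearMap.trace ℝ Vp (U ∘ₗ J.tm y x ∘ₗ U') := by
    rw [hU'D, LinearMap.comp_sub, LinearMap.comp_smul, map_sub, map_smul, smul_eq_mul]
  linarith

lemma two_mul_trace_peirceProj2_comp_tp (hB : J.IsAssociative B) (b : Basis ι ℝ Vp)
    (c : Basis ι ℝ Vm) (hbc : ∀ i j, B (b i) (c j) = if i = j then 1 else 0) {e : Vp} {e' : Vm}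
    (he : J.tp e e' e = (2 : ℝ) • e) {x : Vp} {y : Vm}
    (hv : J.tm e' e (J.tm y x e') = (2 : ℝ) • J.tm y x e') :
    2 * LinearMap.trace ℝ Vp (peirceProj2 (J.tp e e') ∘ₗ J.tp x y) =
      LinearMap.trace ℝ Vp (peirceProj2 (J.tp e e') ∘ₗ J.tp e (J.tm y x e')) := by
  have h₁ := J.trace_tp_flip_comp_tm_flip_comp_tp hB b c hbc e e' x y
  have h₂ := J.trace_tp_flip_comp_tm_flip_comp_tp hB b c hbc e e' e (J.tm y x e')
  rw [J.symm_m (J.tm y x e') e e', hv, show (J.tm ((2 : ℝ) • J.tm y x e')).flip e' =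
    (2 : ℝ) • (J.tm (J.tm y x e')).flip e' by ext; simp] at h₂
  rw [← LinearMap.comp_assoc, J.tp_flip_comp_tm_flip he] at h₁ h₂
  simp only [LinearMap.smul_comp, LinearMap.comp_smul, map_smul, smul_eq_mul] at h₁ h₂
  linarith

theorem trace_peirceProj2_comp_tp (hB : J.IsAssociative B) (b : Basis ι ℝ Vp)
    (c : Basis ι ℝ Vm) (hbc : ∀ i j, B (b i) (c j) = if i = j then 1 else 0) {e : Vp} {e' : Vm}
    (he : J.tp e e' e = (2 : ℝ) • e) (he' : J.tm e' e e' = (2 : ℝ) • e')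
    (hD : HasPeirceSpectrum (J.tp e e')) (hD' : HasPeirceSpectrum (J.tm e' e)) {p₂ : ℝ}
    (h₂ : ∀ u v, J.tp e e' u = (2 : ℝ) • u → J.tm e' e v = (2 : ℝ) • v →
      LinearMap.trace ℝ Vp (peirceProj2 (J.tp e e') ∘ₗ J.tp u v) = 2 * p₂ * B u v)
    (x : Vp) (y : Vm) :
    LinearMap.trace ℝ Vp (peirceProj2 (J.tp e e') ∘ₗ J.tp x y) = p₂ * B (J.tp e e' x) y := by
  let F : Vp →ₗ[ℝ] Vm →ₗ[ℝ] ℝ :=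
    J.tp.compr₂ (LinearMap.trace ℝ Vp ∘ₗ LinearMap.mulLeft ℝ (peirceProj2 (J.tp e e'))) -
      p₂ • B.comp (J.tp e e')
  have hF : ∀ x y, F x y =
      LinearMap.trace ℝ Vp (peirceProj2 (J.tp e e') ∘ₗ J.tp x y) - p₂ * B (J.tp e e' x) y :=
    fun x y ↦ by simp [F, Module.End.mul_eq_comp]
  suffices F = 0 by simpa [hF, sub_eq_zero] using congr($this x y)
  refine hD.pairing_eq_zero hD' F (fun x y ↦ ?_) fun i x y hx hy ↦ ?_
  · have htr : LinearMap.trace ℝ Vp (peirceProj2 (J.tp e e') ∘ₗ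
        (J.tp (J.tp e e' x) y - J.tp x (J.tm e' e y))) = 0 := by
      rw [← lie_tp_tp, ← Module.End.mul_eq_comp, Ring.lie_def, mul_sub, ← mul_assoc,
        ← (commute_peirceProj2 _).eq, mul_assoc, ← mul_assoc (peirceProj2 _), ← Ring.lie_def,
        LinearMap.trace_lie]
    rw [LinearMap.comp_sub, map_sub, sub_eq_zero] at htr
    rw [hF, hF, htr, hB e e' (J.tp e e' x) y]
  · have hv : J.tm e' e (J.tm y x e') = (2 : ℝ) • J.tm y x e' := by
      simpa using J.tm_tm_eq_smul hy hx he'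
    have h := J.two_mul_trace_peirceProj2_comp_tp hB b c hbc he hv
    rw [h₂ e _ he hv, ← hB, J.symm_p x y e, hB, J.symm_m y e e', hy, map_smul,
      smul_eq_mul] at h
    rw [hF, hx, map_smul, LinearMap.smul_apply, smul_eq_mul]
    linarith

end Trace

end JordanPair

theorem jordanPair_peirce2_dual_sum_general {Vp Vm : Type*}
    [AddCommGroup Vp] [Module ℝ Vp] [FiniteDimensional ℝ Vp]
    [AddCommGroup Vm] [Module ℝ Vm] [FiniteDimensional ℝ Vm]
    (J : JordanPair Vp Vm) (e : Vp) (e' : Vm)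
    (he : (2⁻¹ : ℝ) • J.tp e e' e = e) (he' : (2⁻¹ : ℝ) • J.tm e' e e' = e')
    (p p2 : ℝ)
    (τ : Vp → Vm → ℝ)
    (hτ : ∀ x y, τ x y = (1 / (2 * p)) * LinearMap.trace ℝ Vp (J.tp x y))
    (hnd₁ : ∀ y : Vm, (∀ x : Vp, τ x y = 0) → y = 0)
    (hnd₂ : ∀ x : Vp, (∀ y : Vm, τ x y = 0) → x = 0)
    -- the Peirce-2 subpair and its structure constant `p₂`
    (P2 : Submodule ℝ Vp) (hP2 : P2 = LinearMap.ker (J.tp e e' - (2 : ℝ) • LinearMap.id))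
    (hp2def : ∀ (u : Vp) (v : Vm), J.tp e e' u = (2 : ℝ) • u → J.tm e' e v = (2 : ℝ) • v →
      ∀ (hmaps : ∀ z ∈ P2, J.tp u v z ∈ P2),
        LinearMap.trace ℝ P2 ((J.tp u v).restrict hmaps) = 2 * p2 * τ u v)
    -- a basis of `V⁺` with dual basis of `V⁻`, compatible with the Peirce decomposition
    {ι : Type*} [Fintype ι] [DecidableEq ι]
    (b : Module.Basis ι ℝ Vp) (cdual : ι → Vm)
    (hdual : ∀ α β, τ (b α) (cdual β) = if α = β then 1 else 0)
    (I2 I1 I0 : Finset ι)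
    (hpart : ∀ α, (α ∈ I2 ∧ α ∉ I1 ∧ α ∉ I0) ∨ (α ∉ I2 ∧ α ∈ I1 ∧ α ∉ I0) ∨
      (α ∉ I2 ∧ α ∉ I1 ∧ α ∈ I0))
    (hc2 : ∀ α ∈ I2, J.tp e e' (b α) = (2 : ℝ) • b α)
    (hc1 : ∀ α ∈ I1, J.tp e e' (b α) = b α)
    (hc0 : ∀ α ∈ I0, J.tp e e' (b α) = 0) :
    ∑ α ∈ I2, J.tp (b α) (cdual α) = p2 • J.tp e e' := by
  set B : Vp →ₗ[ℝ] Vm →ₗ[ℝ] ℝ := (1 / (2 * p)) • J.traceForm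
  have hτB : ∀ x y, τ x y = B x y := fun x y ↦ by simp [B, hτ, JordanPair.traceForm]
  have hB : J.IsAssociative B := fun x y u v ↦ by simp [B, J.isAssociative_traceForm x y u v]
  clear_value B
  simp only [hτB] at hdual hnd₁ hnd₂ hp2def
  have hD : HasPeirceSpectrum (J.tp e e') := .of_basis b fun α ↦ by
    rcases hpart α with ⟨h2, -, -⟩ | ⟨-, h1, -⟩ | ⟨-, -, h0⟩
    exacts [.inr (.inr (hc2 α h2)), .inr (.inl (hc1 α h1)), .inl (hc0 α h0)]
  have hQ : ∀ α, peirceProj2 (J.tp e e') (b α) = if α ∈ I2 then b α else 0 := fun α ↦ by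
    rcases hpart α with ⟨h2, -, -⟩ | ⟨h2, h1, -⟩ | ⟨h2, -, h0⟩
    · simp [h2, peirceProj2_apply_of_apply_eq (hc2 α h2)]
    · simp [h2, peirceProj2_apply, hc1 α h1]
    · simp [h2, peirceProj2_apply, hc0 α h0]
  have hP : ∀ z, z ∈ P2 ↔ J.tp e e' z = (2 : ℝ) • z := by simp [hP2, sub_eq_zero]
  have h₂ : ∀ u v, J.tp e e' u = (2 : ℝ) • u → J.tm e' e v = (2 : ℝ) • v →
      LinearMap.trace ℝ Vp (peirceProj2 (J.tp e e') ∘ₗ J.tp u v) = 2 * p2 * B u v := by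
    intro u v hu hv
    have hmaps : ∀ z ∈ P2, J.tp u v z ∈ P2 := fun z hz ↦
      (hP _).2 (by simpa using J.tp_tp_eq_smul hu hv ((hP z).1 hz))
    rw [hD.trace_peirceProj2_comp hP hmaps, hp2def u v hu hv hmaps]
  have key := J.trace_peirceProj2_comp_tp hB b (b.ofPairing B hdual hnd₁) (by simpa using hdual)
    ((inv_smul_eq_iff₀ two_ne_zero).1 he) ((inv_smul_eq_iff₀ two_ne_zero).1 he')
    hD (hD.of_adjoint B hnd₁ (hB e e')) h₂
  ext x
  refine sub_eq_zero.1 (hnd₂ _ fun w ↦ ?_)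
  rw [map_sub, LinearMap.sub_apply, hB.pairing_sum_tp_apply b hdual hQ, key]
  simp

/-- **Peirce-2 part of the dual-basis sum.** Let `e = (e,e')` be an idempotent of a
finite-dimensional simple real Jordan pair with non-degenerate trace form
`τ(x,y) = (1/2p)·Tr_{V⁺}(D_{x,y})`, and let `{c_α}`, `{ĉ_α}` be dual bases compatible with
the Peirce decomposition (index sets `I₂, I₁, I₀`).  Then
`∑_{α ∈ I₂} D_{c_α, ĉ_α} = p₂ · D_{e,e'}`, where `p₂` is the structure constant of the
simple subpair `(V₂⁺, V₂⁻)`, i.e. `Tr_{V₂⁺}(D_{u,v}) = 2p₂·τ(u,v)` for `u ∈ V₂⁺`,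
`v ∈ V₂⁻`. -/
theorem jordanPair_peirce2_dual_sum {Vp Vm : Type*}
    [AddCommGroup Vp] [Module ℝ Vp] [FiniteDimensional ℝ Vp]
    [AddCommGroup Vm] [Module ℝ Vm] [FiniteDimensional ℝ Vm]
    (J : JordanPair Vp Vm) (e : Vp) (e' : Vm)
    (he : (2⁻¹ : ℝ) • J.tp e e' e = e) (he' : (2⁻¹ : ℝ) • J.tm e' e e' = e')
    (p p2 : ℝ) (hp : 0 < p) (hp2 : 0 < p2)
    (τ : Vp → Vm → ℝ)
    (hτ : ∀ x y, τ x y = (1 / (2 * p)) * LinearMap.trace ℝ Vp (J.tp x y))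
    (hnd₁ : ∀ y : Vm, (∀ x : Vp, τ x y = 0) → y = 0)
    (hnd₂ : ∀ x : Vp, (∀ y : Vm, τ x y = 0) → x = 0)
    -- the Peirce-2 subpair and its structure constant `p₂`
    (P2 : Submodule ℝ Vp) (hP2 : P2 = LinearMap.ker (J.tp e e' - (2 : ℝ) • LinearMap.id))
    (hp2def : ∀ (u : Vp) (v : Vm), J.tp e e' u = (2 : ℝ) • u → J.tm e' e v = (2 : ℝ) • v →
      ∀ (hmaps : ∀ z ∈ P2, J.tp u v z ∈ P2),
        LinearMap.trace ℝ P2 ((J.tp u v).restrict hmaps) = 2 * p2 * τ u v)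
    -- a basis of `V⁺` with dual basis of `V⁻`, compatible with the Peirce decomposition
    {ι : Type*} [Fintype ι] [DecidableEq ι]
    (b : Module.Basis ι ℝ Vp) (cdual : ι → Vm)
    (hdual : ∀ α β, τ (b α) (cdual β) = if α = β then 1 else 0)
    (I2 I1 I0 : Finset ι)
    (hpart : ∀ α, (α ∈ I2 ∧ α ∉ I1 ∧ α ∉ I0) ∨ (α ∉ I2 ∧ α ∈ I1 ∧ α ∉ I0) ∨
      (α ∉ I2 ∧ α ∉ I1 ∧ α ∈ I0))
    (hc2 : ∀ α ∈ I2, J.tp e e' (b α) = (2 : ℝ) • b α)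
    (hc1 : ∀ α ∈ I1, J.tp e e' (b α) = b α)
    (hc0 : ∀ α ∈ I0, J.tp e e' (b α) = 0) :
    ∑ α ∈ I2, J.tp (b α) (cdual α) = p2 • J.tp e e' :=
  jordanPair_peirce2_dual_sum_general J e e' he he' p p2 τ hτ hnd₁ hnd₂ P2 hP2 hp2def b cdual hdual
    I2 I1 I0 hpart hc2 hc1 hc0
end
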